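/- arXiv:1603.04130 — 2 statements merged into one kernel-verified Lean document; each statement's English description precedes it below -/
import Mathlib

section
/- Let d = 2 or d = 3, θ ∈ (0,1], and let p satisfy V(R)·p = 1 + θ/R^{d−1}. For the SIR epidemic started from η_0 = {0}, ρ_0 = ∅, for every K > 0 and every n ≤ 4·R^{d−1}, with I_n = [−K√n, K√n]^d one has E(|ρ_{n+1} ∩ I_n^c|) ≤ 2d·e^4·n·exp(−K²/2). -/
open MeasureTheory ProbabilityTheory Filter
open scoped ENNReal Classical

noncomputable section

/-- Vertices of the range-`R` lattice `ℤ^d_R`, in integer coordinates: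
the vertex `x : Fin d → ℤ` represents the point `x/R ∈ ℤ^d/R`. -/
abbrev Vert (d : ℕ) := Fin d → ℤ

/-- `x ∼ y` in `ℤ^d_R`: `0 < ‖x/R − y/R‖_∞ ≤ 1`, i.e. `x ≠ y` and `|x i − y i| ≤ R`. -/
def adj (d R : ℕ) (x y : Vert d) : Prop :=
  x ≠ y ∧ ∀ i, |x i - y i| ≤ (R : ℤ)

/-- `V(R) = (2R+1)^d − 1`, the number of neighbours of any vertex of `ℤ^d_R`. -/
def numNbr (d R : ℕ) : ℕ := (2 * R + 1) ^ d - 1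

/-- An element of `Sym2 (Vert d)` is an edge of `ℤ^d_R` iff its endpoints are adjacent. -/
def IsEdge (d R : ℕ) (e : Sym2 (Vert d)) : Prop :=
  ∃ x y, e = s(x, y) ∧ adj d R x y

/-- The bond variables `B : Ω → Sym2 (Vert d) → Bool` form an i.i.d. Bernoulli(p) family,
indexed by the edges of `ℤ^d_R`, under the probability measure `μ`. -/
def IsBernoulliField {Ω : Type} [MeasurableSpace Ω] (μ : Measure Ω) (d R : ℕ) (p : ℝ)
    (B : Ω → Sym2 (Vert d) → Bool) : Prop :=
  (∀ e, IsEdge d R e → Measurable fun ω => B ω e) ∧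
  iIndepFun (m := fun _ => ⊤) (fun (e : {e : Sym2 (Vert d) // IsEdge d R e}) ω => B ω e.1) μ ∧
  (∀ e, IsEdge d R e → μ {ω | B ω e = true} = ENNReal.ofReal p)

/-- One step of the SIR dynamics, acting on the pair `(η, ρ)` of infected/recovered sets:
`η_{n+1} = {y ∈ ξ_n : ∃ x ∈ η_n, x ∼ y and B(x,y) = 1}` where `ξ_n = (η_n ∪ ρ_n)ᶜ`,
and `ρ_{n+1} = ρ_n ∪ η_n`. -/
def sirStep (d R : ℕ) (b : Sym2 (Vert d) → Bool) :
    Set (Vert d) × Set (Vert d) → Set (Vert d) × Set (Vert d) :=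
  fun q =>
    ({y | y ∉ q.1 ∪ q.2 ∧ ∃ x ∈ q.1, adj d R x y ∧ b s(x, y) = true}, q.2 ∪ q.1)

/-- The infected set `η_n` of the SIR epidemic driven by the bond variables `b`,
started from `(η_0, ρ_0)`. -/
def sirEta (d R : ℕ) (b : Sym2 (Vert d) → Bool) (η0 ρ0 : Set (Vert d)) (n : ℕ) :
    Set (Vert d) :=
  ((sirStep d R b)^[n] (η0, ρ0)).1

/-- The recovered set `ρ_n` of the SIR epidemic driven by the bond variables `b`,
started from `(η_0, ρ_0)`. -/
def sirRho (d R : ℕ) (b : Sym2 (Vert d) → Bool) (η0 ρ0 : Set (Vert d)) (n : ℕ) :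
    Set (Vert d) :=
  ((sirStep d R b)^[n] (η0, ρ0)).2

namespace SIRaux

open Finset

variable {d R : ℕ}

/-- The finite set of admissible steps (displacements to a neighbour). -/
def steps (d R : ℕ) : Finset (Vert d) :=
  (Fintype.piFinset (fun _ : Fin d => Finset.Icc (-(R:ℤ)) (R:ℤ))).erase 0

lemma mem_steps {z : Vert d} : z ∈ steps d R ↔ z ≠ 0 ∧ ∀ i, |z i| ≤ (R:ℤ) := by
  simp [steps, Fintype.mem_piFinset, abs_le]

lemma card_steps : (steps d R).card = numNbr d R := by
  rw [steps, Finset.card_erase_of_mem, Fintype.card_piFinset]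
  · simp only [Int.card_Icc, numNbr]
    have : ((R:ℤ) + 1 - -(R:ℤ)).toNat = 2 * R + 1 := by omega
    rw [Finset.prod_const, Finset.card_univ, Fintype.card_fin, this]
  · simp [Fintype.mem_piFinset]

/-- Partial sums of steps: vertices along a path. -/
def vtx {m : ℕ} (g : Fin m → Vert d) (k : ℕ) : Vert d :=
  ∑ j ∈ Finset.univ.filter (fun j : Fin m => (j:ℕ) < k), g j

lemma vtx_zero {m : ℕ} (g : Fin m → Vert d) : vtx g 0 = 0 := by simp [vtx]

lemma vtx_succ {m : ℕ} (g : Fin m → Vert d) {k : ℕ} (hk : k < m) :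
    vtx g (k+1) = vtx g k + g ⟨k, hk⟩ := by
  have h : Finset.univ.filter (fun j : Fin m => (j:ℕ) < k + 1)
      = insert ⟨k, hk⟩ (Finset.univ.filter (fun j : Fin m => (j:ℕ) < k)) := by
    ext j
    simp only [Finset.mem_filter, Finset.mem_univ, true_and, Finset.mem_insert]
    constructor
    · intro hj
      rcases Nat.lt_succ_iff_lt_or_eq.1 hj with h' | h'
      · exact Or.inr h'
      · exact Or.inl (Fin.ext h')
    · rintro (rfl | hj)
      · exact Nat.lt_succ_self k
      · exact Nat.lt_succ_of_lt hj
  rw [vtx, vtx, h, Finset.sum_insert (by simp)]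
  ring

lemma vtx_last {m : ℕ} (g : Fin m → Vert d) : vtx g m = ∑ j, g j := by
  rw [vtx, Finset.filter_true_of_mem (fun j _ => j.isLt)]

/-- The `k`-th edge of the path with steps `g`. -/
def pedge {m : ℕ} (g : Fin m → Vert d) (k : Fin m) : Sym2 (Vert d) :=
  s(vtx g (k:ℕ), vtx g ((k:ℕ)+1))

lemma adj_pedge {m : ℕ} {g : Fin m → Vert d} (hg : ∀ k, g k ∈ steps d R) (k : Fin m) :
    adj d R (vtx g (k:ℕ)) (vtx g ((k:ℕ)+1)) := by
  obtain ⟨h0, hle⟩ := mem_steps.1 (hg k)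
  rw [vtx_succ g k.isLt]
  constructor
  · intro h
    apply h0
    have := congrArg (fun v => v - vtx g (k:ℕ)) h
    simpa using this.symm
  · intro i
    have : vtx g (k:ℕ) i - (vtx g (k:ℕ) + g ⟨(k:ℕ), k.isLt⟩) i = -(g ⟨(k:ℕ), k.isLt⟩ i) := by
      simp
    rw [Fin.eta, this, abs_neg]
    exact hle i

lemma isEdge_pedge {m : ℕ} {g : Fin m → Vert d} (hg : ∀ k, g k ∈ steps d R) (k : Fin m) :
    IsEdge d R (pedge g k) :=
  ⟨_, _, rfl, adj_pedge hg k⟩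

/-- Injectivity of the vertex sequence of a path. -/
def PInj {m : ℕ} (g : Fin m → Vert d) : Prop :=
  ∀ k l : ℕ, k ≤ m → l ≤ m → vtx g k = vtx g l → k = l

lemma pedge_injective {m : ℕ} {g : Fin m → Vert d} (hinj : PInj g) :
    Function.Injective (pedge g) := by
  intro k l h
  rw [pedge, pedge, Sym2.eq_iff] at h
  rcases h with ⟨h1, _⟩ | ⟨h1, h2⟩
  · exact Fin.ext (hinj _ _ k.isLt.le l.isLt.le h1)
  · have e1 : (k:ℕ) = (l:ℕ) + 1 := hinj _ _ k.isLt.le l.isLt h1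
    have e2 : (k:ℕ) + 1 = (l:ℕ) := hinj _ _ k.isLt l.isLt.le h2
    omega


section Dynamics

variable {b : Sym2 (Vert d) → Bool} {η0 ρ0 : Set (Vert d)}

lemma sirEta_succ (n : ℕ) :
    sirEta d R b η0 ρ0 (n+1) =
      {y | y ∉ sirEta d R b η0 ρ0 n ∪ sirRho d R b η0 ρ0 n ∧
        ∃ x ∈ sirEta d R b η0 ρ0 n, adj d R x y ∧ b s(x, y) = true} := by
  rw [sirEta, Function.iterate_succ_apply']
  rfl

lemma sirRho_succ (n : ℕ) :
    sirRho d R b η0 ρ0 (n+1) = sirRho d R b η0 ρ0 n ∪ sirEta d R b η0 ρ0 n := by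
  rw [sirRho, Function.iterate_succ_apply']
  rfl

lemma sirRho_mono {k l : ℕ} (h : k ≤ l) : sirRho d R b η0 ρ0 k ⊆ sirRho d R b η0 ρ0 l := by
  induction l with
  | zero => simp_all
  | succ l ih =>
    rcases Nat.le_succ_iff.1 h with h' | h'
    · exact (ih h').trans (by rw [sirRho_succ]; exact Set.subset_union_left)
    · exact h' ▸ subset_rfl

lemma sirEta_subset_sirRho {j k : ℕ} (h : j < k) :
    sirEta d R b η0 ρ0 j ⊆ sirRho d R b η0 ρ0 k := by
  refine Set.Subset.trans ?_ (sirRho_mono h)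
  rw [sirRho_succ]
  exact Set.subset_union_right

lemma sirEta_disj {j k : ℕ} (h : j < k) {x : Vert d}
    (hx : x ∈ sirEta d R b η0 ρ0 k) : x ∉ sirEta d R b η0 ρ0 j := by
  intro hj
  obtain ⟨k', rfl⟩ : ∃ k', k = k' + 1 := ⟨k - 1, by omega⟩
  rw [sirEta_succ] at hx
  rcases Nat.lt_succ_iff_lt_or_eq.1 h with h' | h'
  · exact hx.1 (Set.mem_union_right _ (sirEta_subset_sirRho h' hj))
  · exact hx.1 (Set.mem_union_left _ (h' ▸ hj))

lemma mem_sirRho_elim {x : Vert d} {n : ℕ} (hx : x ∈ sirRho d R b η0 ρ0 (n+1)) :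
    x ∈ ρ0 ∨ ∃ k ≤ n, x ∈ sirEta d R b η0 ρ0 k := by
  induction n with
  | zero =>
    rw [sirRho_succ] at hx
    rcases hx with hx | hx
    · exact Or.inl hx
    · exact Or.inr ⟨0, le_refl 0, hx⟩
  | succ n ih =>
    rw [sirRho_succ] at hx
    rcases hx with hx | hx
    · rcases ih hx with h | ⟨k, hk, h⟩
      · exact Or.inl h
      · exact Or.inr ⟨k, hk.trans (Nat.le_succ n), h⟩
    · exact Or.inr ⟨n+1, le_refl _, hx⟩

lemma exists_fn {x : Vert d} {m : ℕ} (hx : x ∈ sirEta d R b η0 ρ0 m) :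
    ∃ f : ℕ → Vert d, f m = x ∧ (∀ j ≤ m, f j ∈ sirEta d R b η0 ρ0 j) ∧
      ∀ j < m, adj d R (f j) (f (j+1)) ∧ b s(f j, f (j+1)) = true := by
  induction m generalizing x with
  | zero =>
    refine ⟨fun _ => x, rfl, fun j hj => ?_, fun j hj => by omega⟩
    obtain rfl : j = 0 := Nat.le_zero.1 hj
    exact hx
  | succ m ih =>
    rw [sirEta_succ] at hx
    obtain ⟨x', hx', hadj, hb⟩ := hx.2
    obtain ⟨f, hfm, hmem, hstep⟩ := ih hx'
    refine ⟨Function.update f (m+1) x, Function.update_self _ _ _, ?_, ?_⟩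
    · intro j hj
      rcases Nat.lt_succ_iff_lt_or_eq.1 (Nat.lt_succ_of_le hj) with h' | h'
      · rw [Function.update_of_ne (by omega)]
        exact hmem j (by omega)
      · subst h'
        rw [Function.update_self]
        rw [sirEta_succ]
        exact ⟨hx.1, x', hx', hadj, hb⟩
    · intro j hj
      rcases Nat.lt_succ_iff_lt_or_eq.1 hj with h' | h'
      · rw [Function.update_of_ne (by omega), Function.update_of_ne (by omega)]
        exact hstep j h'
      · subst h'
        rw [Function.update_of_ne (by omega), Function.update_self, hfm]
        exact ⟨hadj, hb⟩

lemma exists_path {x : Vert d} {n : ℕ}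
    (hx : x ∈ sirRho d R b {0} ∅ (n+1)) (hx0 : x ≠ 0) :
    ∃ m ∈ Finset.Icc 1 n, ∃ g : Fin m → Vert d,
      (∀ k, g k ∈ steps d R) ∧ PInj g ∧ (∑ j, g j) = x ∧
        ∀ k : Fin m, b (pedge g k) = true := by
  rcases mem_sirRho_elim hx with h | ⟨m, hm, h⟩
  · exact absurd h (Set.notMem_empty x)
  have hm1 : 1 ≤ m := by
    rcases Nat.eq_zero_or_pos m with rfl | h'
    · exact absurd (show x ∈ ({0} : Set (Vert d)) from h) (by simpa using hx0)
    · exact h'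
  obtain ⟨f, hfm, hmem, hstep⟩ := exists_fn h
  have hf0 : f 0 = 0 := hmem 0 (Nat.zero_le m)
  set g : Fin m → Vert d := fun k => f ((k:ℕ)+1) - f (k:ℕ) with hg
  have hvtx : ∀ k ≤ m, vtx g k = f k := by
    intro k hk
    induction k with
    | zero => rw [vtx_zero, hf0]
    | succ k ih =>
      rw [vtx_succ g (by omega), ih (by omega)]
      simp [hg]
  refine ⟨m, Finset.mem_Icc.2 ⟨hm1, hm⟩, g, ?_, ?_, ?_, ?_⟩
  · intro k
    obtain ⟨hne, hle⟩ := (hstep (k:ℕ) k.isLt).1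
    rw [mem_steps]
    refine ⟨sub_ne_zero.2 fun h => hne h.symm, fun i => ?_⟩
    have : g k i = -(f (k:ℕ) i - f ((k:ℕ)+1) i) := by simp [hg]
    rw [this, abs_neg]
    exact hle i
  · intro k l hk hl hkl
    by_contra hne
    rcases lt_or_gt_of_ne (show k ≠ l from hne) with h' | h'
    · exact sirEta_disj h' (hmem l hl) (by rw [← hvtx l hl, ← hkl, hvtx k hk]; exact hmem k hk)
    · exact sirEta_disj h' (hmem k hk) (by rw [← hvtx k hk, hkl, hvtx l hl]; exact hmem l hl)
  · rw [← vtx_last, hvtx m le_rfl, hfm]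
  · intro k
    rw [pedge, hvtx (k:ℕ) k.isLt.le, hvtx ((k:ℕ)+1) k.isLt]
    exact (hstep (k:ℕ) k.isLt).2

end Dynamics

section Prob

variable {Ω : Type} [MeasurableSpace Ω] {μ : Measure Ω} {p : ℝ}
  {B : Ω → Sym2 (Vert d) → Bool}

/-- The event that all edges of the path `g` are open. -/
def pathEvent (B : Ω → Sym2 (Vert d) → Bool) {m : ℕ} (g : Fin m → Vert d) : Set Ω :=
  ⋂ k : Fin m, {ω | B ω (pedge g k) = true}

lemma mem_pathEvent {ω : Ω} {m : ℕ} {g : Fin m → Vert d} :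
    ω ∈ pathEvent B g ↔ ∀ k : Fin m, B ω (pedge g k) = true := by
  simp [pathEvent]

lemma measurableSet_pathEvent (hB : IsBernoulliField μ d R p B) {m : ℕ}
    {g : Fin m → Vert d} (hg : ∀ k, g k ∈ steps d R) :
    MeasurableSet (pathEvent B g) := by
  refine MeasurableSet.iInter fun k => ?_
  have : {ω | B ω (pedge g k) = true} = (fun ω => B ω (pedge g k)) ⁻¹' {true} := by
    ext ω; simp
  rw [this]
  exact hB.1 _ (isEdge_pedge hg k) (by trivial)

lemma meas_pathEvent (hB : IsBernoulliField μ d R p B) {m : ℕ}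
    {g : Fin m → Vert d} (hg : ∀ k, g k ∈ steps d R) (hinj : PInj g) :
    μ (pathEvent B g) = (ENNReal.ofReal p) ^ m := by
  set ι : Fin m → {e : Sym2 (Vert d) // IsEdge d R e} :=
    fun k => ⟨pedge g k, isEdge_pedge hg k⟩ with hι
  have hιinj : Function.Injective ι := fun k l h =>
    pedge_injective hinj (congrArg Subtype.val h)
  have key := hB.2.1.measure_inter_preimage_eq_mul (Finset.image ι Finset.univ)
    (sets := fun _ => {true}) (fun _ _ => trivial)
  have hset : (⋂ e ∈ Finset.image ι Finset.univ,
      (fun ω => B ω e.1) ⁻¹' {true}) = pathEvent B g := by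
    ext ω
    simp only [Set.mem_iInter, Finset.mem_image, Finset.mem_univ, true_and,
      Set.mem_preimage, Set.mem_singleton_iff, mem_pathEvent]
    constructor
    · intro h k
      exact h (ι k) ⟨k, rfl⟩
    · rintro h e ⟨k, rfl⟩
      exact h k
  rw [hset] at key
  rw [key, Finset.prod_image (fun k _ l _ h => hιinj h)]
  have : ∀ k : Fin m, μ ((fun ω => B ω (ι k).1) ⁻¹' {true}) = ENNReal.ofReal p := by
    intro k
    have : ((fun ω => B ω (ι k).1) ⁻¹' {true}) = {ω | B ω (pedge g k) = true} := by
      ext ω; simp [hι]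
    rw [this]
    exact hB.2.2 _ (isEdge_pedge hg k)
  rw [Finset.prod_congr rfl (fun k _ => this k), Finset.prod_const, Finset.card_univ,
    Fintype.card_fin]

end Prob

section Count

lemma count_exp (S : Finset (Vert d)) (m : ℕ) (f : Vert d → ℝ) (t : ℝ) :
    (((Fintype.piFinset fun _ : Fin m => S).filter
        (fun g => t < ∑ k, f (g k))).card : ℝ) * Real.exp t
      ≤ (∑ z ∈ S, Real.exp (f z)) ^ m := by
  rw [Finset.sum_pow']
  calc (((Fintype.piFinset fun _ : Fin m => S).filter
        (fun g => t < ∑ k, f (g k))).card : ℝ) * Real.exp t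
      = ∑ g ∈ (Fintype.piFinset fun _ : Fin m => S).filter
          (fun g => t < ∑ k, f (g k)), Real.exp t := by
        rw [Finset.sum_const, nsmul_eq_mul]
    _ ≤ ∑ g ∈ (Fintype.piFinset fun _ : Fin m => S).filter
          (fun g => t < ∑ k, f (g k)), ∏ k, Real.exp (f (g k)) := by
        refine Finset.sum_le_sum fun g hg => ?_
        rw [← Real.exp_sum]
        exact Real.exp_le_exp.2 (le_of_lt (Finset.mem_filter.1 hg).2)
    _ ≤ ∑ g ∈ (Fintype.piFinset fun _ : Fin m => S), ∏ k, Real.exp (f (g k)) := by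
        refine Finset.sum_le_sum_of_subset_of_nonneg (Finset.filter_subset _ _)
          fun g _ _ => Finset.prod_nonneg fun k _ => (Real.exp_pos _).le

lemma steps_exp_bound (c : ℝ) (i : Fin d) :
    ∑ z ∈ steps d R, Real.exp (c * ((z i : ℤ) : ℝ))
      ≤ (numNbr d R : ℝ) * Real.exp (c^2 * (R:ℝ)^2 / 2) := by
  have hneg : ∑ z ∈ steps d R, Real.exp (c * ((z i : ℤ) : ℝ))
      = ∑ z ∈ steps d R, Real.exp (-(c * ((z i : ℤ) : ℝ))) := by
    refine Finset.sum_nbij' (fun z => -z) (fun z => -z) ?_ ?_ ?_ ?_ ?_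
    · intro z hz
      rw [mem_steps] at hz ⊢
      exact ⟨neg_ne_zero.2 hz.1, fun j => by
        show |(-z) j| ≤ (R:ℤ); rw [Pi.neg_apply, abs_neg]; exact hz.2 j⟩
    · intro z hz
      rw [mem_steps] at hz ⊢
      exact ⟨neg_ne_zero.2 hz.1, fun j => by
        show |(-z) j| ≤ (R:ℤ); rw [Pi.neg_apply, abs_neg]; exact hz.2 j⟩
    · intro z _; simp
    · intro z _; simp
    · intro z _
      simp
  have hcosh : ∑ z ∈ steps d R, Real.exp (c * ((z i : ℤ) : ℝ))
      = ∑ z ∈ steps d R, Real.cosh (c * ((z i : ℤ) : ℝ)) := by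
    have h2 : (2:ℝ) * ∑ z ∈ steps d R, Real.exp (c * ((z i : ℤ) : ℝ))
        = 2 * ∑ z ∈ steps d R, Real.cosh (c * ((z i : ℤ) : ℝ)) := by
      calc (2:ℝ) * ∑ z ∈ steps d R, Real.exp (c * ((z i : ℤ) : ℝ))
          = ∑ z ∈ steps d R, Real.exp (c * ((z i : ℤ) : ℝ))
            + ∑ z ∈ steps d R, Real.exp (-(c * ((z i : ℤ) : ℝ))) := by
            rw [← hneg]; ring
        _ = ∑ z ∈ steps d R, (Real.exp (c * ((z i : ℤ) : ℝ))
            + Real.exp (-(c * ((z i : ℤ) : ℝ)))) := by rw [Finset.sum_add_distrib]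
        _ = 2 * ∑ z ∈ steps d R, Real.cosh (c * ((z i : ℤ) : ℝ)) := by
            rw [Finset.mul_sum]
            refine Finset.sum_congr rfl fun z _ => ?_
            rw [Real.cosh_eq]; ring
    linarith
  rw [hcosh]
  have hle : ∀ z ∈ steps d R, Real.cosh (c * ((z i : ℤ) : ℝ))
      ≤ Real.exp (c^2 * (R:ℝ)^2 / 2) := by
    intro z hz
    refine le_trans ((Real.cosh_le_cosh (x := c * ((z i : ℤ) : ℝ)) (y := c * (R:ℝ))).2 ?_) ?_
    · rw [abs_mul, abs_mul]
      refine mul_le_mul_of_nonneg_left ?_ (abs_nonneg c)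
      have := (mem_steps.1 hz).2 i
      rw [← Int.cast_abs, abs_of_nonneg (by positivity : (0:ℝ) ≤ (R:ℝ))]
      exact_mod_cast this
    · calc Real.cosh (c * (R:ℝ)) ≤ Real.exp ((c * (R:ℝ))^2 / 2) :=
            Real.cosh_le_exp_half_sq _
        _ = Real.exp (c^2 * (R:ℝ)^2 / 2) := by ring_nf
  calc ∑ z ∈ steps d R, Real.cosh (c * ((z i : ℤ) : ℝ))
      ≤ ∑ _z ∈ steps d R, Real.exp (c^2 * (R:ℝ)^2 / 2) := Finset.sum_le_sum hle
    _ = (numNbr d R : ℝ) * Real.exp (c^2 * (R:ℝ)^2 / 2) := by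
        rw [Finset.sum_const, nsmul_eq_mul, card_steps]

lemma count_one_side {m : ℕ} (i : Fin d) (c t' : ℝ) :
    ((((Fintype.piFinset fun _ : Fin m => steps d R)).filter
        (fun g => t' < ∑ k, c * (((g k i) : ℤ) : ℝ))).card : ℝ)
      ≤ (numNbr d R : ℝ) ^ m * Real.exp ((m : ℝ) * (c^2 * (R:ℝ)^2 / 2) - t') := by
  have h1 := count_exp (steps d R) m (fun z => c * ((z i : ℤ) : ℝ)) t'
  have h2 : (∑ z ∈ steps d R, Real.exp (c * ((z i : ℤ) : ℝ))) ^ m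
      ≤ ((numNbr d R : ℝ) * Real.exp (c^2 * (R:ℝ)^2 / 2)) ^ m := by
    refine pow_le_pow_left₀ (Finset.sum_nonneg fun z _ => (Real.exp_pos _).le)
      (steps_exp_bound c i) m
  have h3 : ((numNbr d R : ℝ) * Real.exp (c^2 * (R:ℝ)^2 / 2)) ^ m
      = (numNbr d R : ℝ) ^ m * Real.exp ((m : ℝ) * (c^2 * (R:ℝ)^2 / 2)) := by
    rw [mul_pow, ← Real.exp_nat_mul]
  have h4 := le_trans h1 (h2.trans_eq h3)
  have h5 : Real.exp ((m : ℝ) * (c^2 * (R:ℝ)^2 / 2) - t')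
      = Real.exp ((m : ℝ) * (c^2 * (R:ℝ)^2 / 2)) * (Real.exp t')⁻¹ := by
    rw [Real.exp_sub]; ring
  rw [h5, ← mul_assoc]
  have h4' := (le_div_iff₀ (Real.exp_pos t')).2 h4
  calc ((((Fintype.piFinset fun _ : Fin m => steps d R)).filter
        (fun g => t' < ∑ k, c * (((g k i) : ℤ) : ℝ))).card : ℝ)
      ≤ (numNbr d R : ℝ) ^ m * Real.exp ((m : ℝ) * (c^2 * (R:ℝ)^2 / 2)) / Real.exp t' := h4'
    _ = (numNbr d R : ℝ) ^ m * Real.exp ((m : ℝ) * (c^2 * (R:ℝ)^2 / 2)) * (Real.exp t')⁻¹ := by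
        ring

lemma count_outside {m n : ℕ} (hmn : m ≤ n) (hn : 1 ≤ n) (hR : 0 < R) {K : ℝ} (hK : 0 < K) :
    (((Fintype.piFinset fun _ : Fin m => steps d R).filter
        (fun g => ∃ i, K * Real.sqrt n * (R:ℝ) < |(Int.cast ((∑ j, g j) i) : ℝ)|)).card : ℝ)
      ≤ 2 * d * (numNbr d R : ℝ) ^ m * Real.exp (-K^2/2) := by
  have hsn : (0:ℝ) < Real.sqrt n := Real.sqrt_pos.2 (by exact_mod_cast hn)
  have hRpos : (0:ℝ) < (R:ℝ) := by exact_mod_cast hR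
  set lam : ℝ := K / (Real.sqrt n * R) with hlam
  have hlampos : 0 < lam := div_pos hK (mul_pos hsn hRpos)
  set T : ℝ := K^2 with hT
  -- the two one-sided filters
  have hsplit : (Fintype.piFinset fun _ : Fin m => steps d R).filter
        (fun g => ∃ i, K * Real.sqrt n * (R:ℝ) < |(Int.cast ((∑ j, g j) i) : ℝ)|)
      ⊆ Finset.univ.biUnion (fun i : Fin d =>
          ((Fintype.piFinset fun _ : Fin m => steps d R).filter
            (fun g => T < ∑ k, lam * (((g k i) : ℤ) : ℝ)))
          ∪ ((Fintype.piFinset fun _ : Fin m => steps d R).filter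
            (fun g => T < ∑ k, (-lam) * (((g k i) : ℤ) : ℝ)))) := by
    intro g hg
    obtain ⟨hgmem, i, hi⟩ := Finset.mem_filter.1 hg
    refine Finset.mem_biUnion.2 ⟨i, Finset.mem_univ i, ?_⟩
    have hv : (Int.cast ((∑ j, g j) i) : ℝ) = ∑ k, (((g k i) : ℤ) : ℝ) := by
      push_cast [Finset.sum_apply]
      rfl
    have habs : K * Real.sqrt n * (R:ℝ) < |∑ k, (((g k i) : ℤ) : ℝ)| := by
      rw [← hv]
      exact hi
    have hlamT : lam * (K * Real.sqrt n * (R:ℝ)) = T := by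
      rw [hlam, hT]
      field_simp
    rcases lt_abs.1 habs with h' | h'
    · refine Finset.mem_union_left _ (Finset.mem_filter.2 ⟨hgmem, ?_⟩)
      calc T = lam * (K * Real.sqrt n * (R:ℝ)) := hlamT.symm
        _ < lam * ∑ k, (((g k i) : ℤ) : ℝ) := (mul_lt_mul_iff_right₀ hlampos).2 h'
        _ = ∑ k, lam * (((g k i) : ℤ) : ℝ) := Finset.mul_sum _ _ _
    · refine Finset.mem_union_right _ (Finset.mem_filter.2 ⟨hgmem, ?_⟩)
      calc T = lam * (K * Real.sqrt n * (R:ℝ)) := hlamT.symm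
        _ < lam * -∑ k, (((g k i) : ℤ) : ℝ) := (mul_lt_mul_iff_right₀ hlampos).2 h'
        _ = ∑ k, (-lam) * (((g k i) : ℤ) : ℝ) := by
            rw [mul_neg, ← Finset.mul_sum, ← neg_mul, Finset.mul_sum]
  -- exponent bound
  have hexp : ∀ c : ℝ, c^2 = lam^2 →
      (m : ℝ) * (c^2 * (R:ℝ)^2 / 2) - T ≤ -K^2/2 := by
    intro c hc
    rw [hc, hlam, hT]
    have hlamsq : (K / (Real.sqrt n * R))^2 * (R:ℝ)^2 = K^2 / n := by
      rw [div_pow, mul_pow, Real.sq_sqrt (by positivity : (0:ℝ) ≤ (n:ℝ))]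
      field_simp
    rw [hlamsq]
    have hm : (m:ℝ) ≤ (n:ℝ) := by exact_mod_cast hmn
    have hn0 : (0:ℝ) < (n:ℝ) := by exact_mod_cast hn
    have h1 : (m : ℝ) * (K^2 / (n:ℝ) / 2) ≤ K^2 / 2 := by
      rw [div_div]
      calc (m:ℝ) * (K^2 / ((n:ℝ)*2)) ≤ (n:ℝ) * (K^2 / ((n:ℝ)*2)) :=
            mul_le_mul_of_nonneg_right hm (by positivity)
        _ = K^2/2 := by field_simp
    nlinarith
  have hone : ∀ (i : Fin d) (c : ℝ), c^2 = lam^2 →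
      ((((Fintype.piFinset fun _ : Fin m => steps d R)).filter
        (fun g => T < ∑ k, c * (((g k i) : ℤ) : ℝ))).card : ℝ)
      ≤ (numNbr d R : ℝ) ^ m * Real.exp (-K^2/2) := by
    intro i c hc
    refine (count_one_side i c T).trans ?_
    exact mul_le_mul_of_nonneg_left (Real.exp_le_exp.2 (hexp c hc)) (by positivity)
  -- put everything together
  have hcard : ((Fintype.piFinset fun _ : Fin m => steps d R).filter
        (fun g => ∃ i, K * Real.sqrt n * (R:ℝ) < |(Int.cast ((∑ j, g j) i) : ℝ)|)).card
      ≤ ∑ i : Fin d,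
        (((Fintype.piFinset fun _ : Fin m => steps d R).filter
            (fun g => T < ∑ k, lam * (((g k i) : ℤ) : ℝ))).card
          + ((Fintype.piFinset fun _ : Fin m => steps d R).filter
            (fun g => T < ∑ k, (-lam) * (((g k i) : ℤ) : ℝ))).card) := by
    refine (Finset.card_le_card hsplit).trans ?_
    refine (Finset.card_biUnion_le).trans ?_
    exact Finset.sum_le_sum fun i _ => Finset.card_union_le _ _
  have : (((Fintype.piFinset fun _ : Fin m => steps d R).filter
        (fun g => ∃ i, K * Real.sqrt n * (R:ℝ) < |(Int.cast ((∑ j, g j) i) : ℝ)|)).card : ℝ)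
      ≤ ∑ i : Fin d, 2 * ((numNbr d R : ℝ) ^ m * Real.exp (-K^2/2)) := by
    calc (((Fintype.piFinset fun _ : Fin m => steps d R).filter
        (fun g => ∃ i, K * Real.sqrt n * (R:ℝ) < |(Int.cast ((∑ j, g j) i) : ℝ)|)).card : ℝ)
        ≤ (∑ i : Fin d,
          (((Fintype.piFinset fun _ : Fin m => steps d R).filter
              (fun g => T < ∑ k, lam * (((g k i) : ℤ) : ℝ))).card
            + ((Fintype.piFinset fun _ : Fin m => steps d R).filter
              (fun g => T < ∑ k, (-lam) * (((g k i) : ℤ) : ℝ))).card) : ℕ) := by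
          exact_mod_cast hcard
      _ = ∑ i : Fin d,
          ((((Fintype.piFinset fun _ : Fin m => steps d R).filter
              (fun g => T < ∑ k, lam * (((g k i) : ℤ) : ℝ))).card : ℝ)
            + (((Fintype.piFinset fun _ : Fin m => steps d R).filter
              (fun g => T < ∑ k, (-lam) * (((g k i) : ℤ) : ℝ))).card : ℝ)) := by
          push_cast; ring
      _ ≤ ∑ i : Fin d, 2 * ((numNbr d R : ℝ) ^ m * Real.exp (-K^2/2)) := by
          refine Finset.sum_le_sum fun i _ => ?_
          have ha := hone i lam rfl
          have hb := hone i (-lam) (by ring)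
          linarith
  refine this.trans ?_
  rw [Finset.sum_const, Finset.card_univ, Fintype.card_fin, nsmul_eq_mul]
  ring_nf
  exact le_refl _

end Count

end SIRaux

open SIRaux

/-- For `d = 2, 3`, `V(R)p = 1 + θ/R^{d−1}` with `θ ∈ (0,1]`, and `n ≤ 4R^{d−1}`:
`E(|ρ_{n+1} ∩ I_n^c|) ≤ 2d·e^4·n·exp(−K²/2)`, where `I_n = [−K√n, K√n]^d`. -/
theorem sir_mean_outside_box (d : ℕ) (hd : d = 2 ∨ d = 3) (R : ℕ) (hR : 0 < R)
    (θ p : ℝ) (hθ0 : 0 < θ) (hθ1 : θ ≤ 1)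
    (hp : (numNbr d R : ℝ) * p = 1 + θ / (R : ℝ) ^ (d - 1))
    (Ω : Type) [MeasurableSpace Ω] (μ : Measure Ω) (hμ : IsProbabilityMeasure μ)
    (B : Ω → Sym2 (Vert d) → Bool) (hB : IsBernoulliField μ d R p B)
    (K : ℝ) (hK : 0 < K) (n : ℕ) (hn : (n : ℝ) ≤ 4 * (R : ℝ) ^ (d - 1)) :
    ∫⁻ ω, ((Set.ncard {x | x ∈ sirRho d R (B ω) ({0} : Set (Vert d)) ∅ (n + 1) ∧
          ∃ i, K * Real.sqrt n < |((x i : ℤ) : ℝ)| / R}) : ℝ≥0∞) ∂μ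
      ≤ ENNReal.ofReal (2 * d * Real.exp 4 * n * Real.exp (-K ^ 2 / 2)) := by
  classical
  -- trivial case n = 0
  rcases Nat.eq_zero_or_pos n with rfl | hn1
  · have hzero : ∀ ω : Ω, {x | x ∈ sirRho d R (B ω) ({0} : Set (Vert d)) ∅ (0 + 1) ∧
        ∃ i, K * Real.sqrt (0:ℕ) < |((x i : ℤ) : ℝ)| / R} = (∅ : Set (Vert d)) := by
      intro ω
      ext x
      simp only [Set.mem_setOf_eq, Set.mem_empty_iff_false, iff_false, not_and]
      intro hx hex
      obtain ⟨i, hi⟩ := hex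
      rw [Nat.cast_zero, Real.sqrt_zero, mul_zero] at hi
      rw [sirRho_succ] at hx
      rcases hx with hx | hx
      · exact hx
      · obtain rfl : x = 0 := hx
        simp at hi
    calc ∫⁻ ω, ((Set.ncard {x | x ∈ sirRho d R (B ω) ({0} : Set (Vert d)) ∅ (0 + 1) ∧
          ∃ i, K * Real.sqrt (0:ℕ) < |((x i : ℤ) : ℝ)| / R}) : ℝ≥0∞) ∂μ
        = ∫⁻ _, (0 : ℝ≥0∞) ∂μ := by
          refine lintegral_congr fun ω => ?_
          rw [hzero ω, Set.ncard_empty, Nat.cast_zero]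
      _ ≤ _ := by rw [lintegral_zero]; exact zero_le
  -- main case
  have hd1 : 1 ≤ d := by rcases hd with rfl | rfl <;> norm_num
  have hRpos : (0:ℝ) < (R:ℝ) := by exact_mod_cast hR
  have hRd : (0:ℝ) < (R:ℝ) ^ (d - 1) := by positivity
  have hnum : 1 ≤ numNbr d R := by
    have h3 : 3 ≤ 2 * R + 1 := by omega
    have : 3 ≤ (2 * R + 1) ^ d := by
      calc 3 = 3 ^ 1 := by norm_num
        _ ≤ 3 ^ d := Nat.pow_le_pow_right (by norm_num) hd1
        _ ≤ (2 * R + 1) ^ d := Nat.pow_le_pow_left h3 d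
    unfold numNbr
    omega
  have hnumR : (1:ℝ) ≤ (numNbr d R : ℝ) := by exact_mod_cast hnum
  have hppos : 0 < p := by
    have h1 : (0:ℝ) < (numNbr d R : ℝ) * p := by
      rw [hp]; positivity
    nlinarith
  -- notation
  set P : (m : ℕ) → Finset (Fin m → Vert d) :=
    fun m => Fintype.piFinset (fun _ : Fin m => steps d R) with hP
  set Out : (m : ℕ) → (Fin m → Vert d) → Prop :=
    fun m g => ∃ i, K * Real.sqrt n < |((((∑ j, g j) i) : ℤ) : ℝ)| / (R:ℝ) with hOut
  set G : (m : ℕ) → Finset (Fin m → Vert d) :=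
    fun m => (P m).filter (fun g => PInj g ∧ Out m g) with hG
  have hGsteps : ∀ m, ∀ g ∈ G m, ∀ k, g k ∈ steps d R := by
    intro m g hg k
    exact Fintype.mem_piFinset.1 (Finset.mem_filter.1 hg).1 k
  -- pointwise bound
  have key : ∀ ω : Ω, ((Set.ncard {x | x ∈ sirRho d R (B ω) ({0} : Set (Vert d)) ∅ (n + 1) ∧
        ∃ i, K * Real.sqrt n < |((x i : ℤ) : ℝ)| / R}) : ℝ≥0∞)
      ≤ ∑ m ∈ Finset.Icc 1 n, ∑ g ∈ G m,
          (pathEvent B g).indicator (fun _ => (1:ℝ≥0∞)) ω := by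
    intro ω
    set T : Finset ((m : ℕ) × (Fin m → Vert d)) :=
      (Finset.Icc 1 n).sigma (fun m => (G m).filter (fun g => ω ∈ pathEvent B g)) with hT
    have hsub : {x | x ∈ sirRho d R (B ω) ({0} : Set (Vert d)) ∅ (n + 1) ∧
        ∃ i, K * Real.sqrt n < |((x i : ℤ) : ℝ)| / R}
        ⊆ ↑(T.image (fun q => ∑ j, q.2 j)) := by
      rintro x ⟨hx, i, hi⟩
      have hx0 : x ≠ 0 := by
        rintro rfl
        have h0 : |(((0 : Vert d) i : ℤ) : ℝ)| / (R:ℝ) = 0 := by simp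
        rw [h0] at hi
        nlinarith [Real.sqrt_nonneg (n:ℝ)]
      obtain ⟨m, hm, g, hsteps, hinj, hsum, hopen⟩ := exists_path hx hx0
      refine Finset.mem_coe.2 (Finset.mem_image.2 ⟨⟨m, g⟩, ?_, hsum⟩)
      refine Finset.mem_sigma.2 ⟨hm, Finset.mem_filter.2 ⟨?_, mem_pathEvent.2 hopen⟩⟩
      refine Finset.mem_filter.2 ⟨Fintype.mem_piFinset.2 hsteps, hinj, ?_⟩
      rw [hOut]
      exact ⟨i, by rw [hsum]; exact hi⟩
    have h1 : (Set.ncard {x | x ∈ sirRho d R (B ω) ({0} : Set (Vert d)) ∅ (n + 1) ∧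
        ∃ i, K * Real.sqrt n < |((x i : ℤ) : ℝ)| / R}) ≤ T.card := by
      calc Set.ncard _ ≤ (T.image (fun q => ∑ j, q.2 j)).card := by
            rw [← Set.ncard_coe_finset]
            exact Set.ncard_le_ncard hsub (Finset.finite_toSet _)
        _ ≤ T.card := Finset.card_image_le
    calc ((Set.ncard {x | x ∈ sirRho d R (B ω) ({0} : Set (Vert d)) ∅ (n + 1) ∧
        ∃ i, K * Real.sqrt n < |((x i : ℤ) : ℝ)| / R}) : ℝ≥0∞)
        ≤ (T.card : ℝ≥0∞) := by exact_mod_cast h1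
      _ = ∑ m ∈ Finset.Icc 1 n, (((G m).filter (fun g => ω ∈ pathEvent B g)).card : ℝ≥0∞) := by
          rw [hT, Finset.card_sigma]
          push_cast
          rfl
      _ = ∑ m ∈ Finset.Icc 1 n, ∑ g ∈ G m,
          (pathEvent B g).indicator (fun _ => (1:ℝ≥0∞)) ω := by
          refine Finset.sum_congr rfl fun m _ => ?_
          rw [Finset.card_filter]
          push_cast
          refine Finset.sum_congr rfl fun g _ => ?_
          rw [Set.indicator_apply]
  -- integrate
  have hmeas : ∀ m, ∀ g ∈ G m, MeasurableSet (pathEvent B g) := fun m g hg =>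
    measurableSet_pathEvent hB (hGsteps m g hg)
  have hint : ∫⁻ ω, (∑ m ∈ Finset.Icc 1 n, ∑ g ∈ G m,
        (pathEvent B g).indicator (fun _ => (1:ℝ≥0∞)) ω) ∂μ
      = ∑ m ∈ Finset.Icc 1 n, ∑ g ∈ G m, μ (pathEvent B g) := by
    rw [lintegral_finset_sum]
    · refine Finset.sum_congr rfl fun m _ => ?_
      rw [lintegral_finset_sum]
      · refine Finset.sum_congr rfl fun g hg => ?_
        exact lintegral_indicator_one (hmeas m g hg)
      · exact fun g hg => measurable_const.indicator (hmeas m g hg)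
    · intro m _
      exact Finset.measurable_sum _ fun g hg => measurable_const.indicator (hmeas m g hg)
  have hmeaspath : ∀ m, ∀ g ∈ G m, μ (pathEvent B g) = (ENNReal.ofReal p) ^ m := by
    intro m g hg
    exact meas_pathEvent hB (hGsteps m g hg) (Finset.mem_filter.1 hg).2.1
  -- numeric bound
  have hnumeric : ∑ m ∈ Finset.Icc 1 n, ∑ g ∈ G m, μ (pathEvent B g)
      ≤ ENNReal.ofReal (2 * d * Real.exp 4 * n * Real.exp (-K ^ 2 / 2)) := by
    have hp0 : 0 ≤ p := hppos.le
    have h1 : ∑ m ∈ Finset.Icc 1 n, ∑ g ∈ G m, μ (pathEvent B g)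
        = ∑ m ∈ Finset.Icc 1 n, ((G m).card : ℝ≥0∞) * (ENNReal.ofReal p) ^ m := by
      refine Finset.sum_congr rfl fun m hm => ?_
      rw [Finset.sum_congr rfl (fun g hg => hmeaspath m g hg), Finset.sum_const, nsmul_eq_mul]
    rw [h1]
    have hC : ∀ m ∈ Finset.Icc 1 n, ((G m).card : ℝ) * p ^ m
        ≤ 2 * d * Real.exp 4 * Real.exp (-K^2/2) := by
      intro m hm
      obtain ⟨hm1, hmn⟩ := Finset.mem_Icc.1 hm
      have hsubG : G m ⊆ (P m).filter
          (fun g => ∃ i, K * Real.sqrt n * (R:ℝ) < |(Int.cast ((∑ j, g j) i) : ℝ)|) := by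
        intro g hg
        obtain ⟨h1', h2'⟩ := Finset.mem_filter.1 hg
        refine Finset.mem_filter.2 ⟨h1', ?_⟩
        obtain ⟨i, hi⟩ := h2'.2
        exact ⟨i, (lt_div_iff₀ hRpos).1 hi⟩
      have hcount := count_outside (d := d) (R := R) hmn hn1 hR hK
      have hcard : ((G m).card : ℝ) ≤ 2 * d * (numNbr d R : ℝ) ^ m * Real.exp (-K^2/2) := by
        refine le_trans ?_ hcount
        exact_mod_cast Finset.card_le_card hsubG
      have hbound : ((numNbr d R : ℝ) * p) ^ m ≤ Real.exp 4 := by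
        have ha : 0 ≤ θ / (R:ℝ)^(d-1) := by positivity
        rw [hp]
        calc (1 + θ/(R:ℝ)^(d-1))^m ≤ (Real.exp (θ/(R:ℝ)^(d-1)))^m := by
              refine pow_le_pow_left₀ (by linarith) ?_ m
              linarith [Real.add_one_le_exp (θ/(R:ℝ)^(d-1))]
          _ = Real.exp ((m:ℝ) * (θ/(R:ℝ)^(d-1))) := (Real.exp_nat_mul _ m).symm
          _ ≤ Real.exp 4 := by
              refine Real.exp_le_exp.2 ?_
              have hm' : (m:ℝ) ≤ (n:ℝ) := by exact_mod_cast hmn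
              have h2 : (m:ℝ) * (θ/(R:ℝ)^(d-1)) ≤ (n:ℝ) / (R:ℝ)^(d-1) := by
                rw [div_eq_mul_inv, div_eq_mul_inv, ← mul_assoc]
                refine mul_le_mul_of_nonneg_right ?_ (by positivity)
                nlinarith
              have h3 : (n:ℝ) / (R:ℝ)^(d-1) ≤ 4 := by
                rw [div_le_iff₀ hRd]
                linarith
              linarith
      have hppow : (0:ℝ) ≤ p ^ m := pow_nonneg hp0 m
      calc ((G m).card : ℝ) * p ^ m
          ≤ (2 * d * (numNbr d R : ℝ) ^ m * Real.exp (-K^2/2)) * p ^ m :=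
            mul_le_mul_of_nonneg_right hcard hppow
        _ = (2 * d * Real.exp (-K^2/2)) * ((numNbr d R : ℝ) * p) ^ m := by
            rw [mul_pow]; ring
        _ ≤ (2 * d * Real.exp (-K^2/2)) * Real.exp 4 :=
            mul_le_mul_of_nonneg_left hbound (by positivity)
        _ = 2 * d * Real.exp 4 * Real.exp (-K^2/2) := by ring
    calc ∑ m ∈ Finset.Icc 1 n, ((G m).card : ℝ≥0∞) * (ENNReal.ofReal p) ^ m
        = ∑ m ∈ Finset.Icc 1 n, ENNReal.ofReal (((G m).card : ℝ) * p ^ m) := by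
          refine Finset.sum_congr rfl fun m _ => ?_
          rw [ENNReal.ofReal_mul (Nat.cast_nonneg _), ENNReal.ofReal_natCast,
            ENNReal.ofReal_pow hp0]
      _ = ENNReal.ofReal (∑ m ∈ Finset.Icc 1 n, ((G m).card : ℝ) * p ^ m) :=
          (ENNReal.ofReal_sum_of_nonneg (fun m _ => by positivity)).symm
      _ ≤ ENNReal.ofReal (2 * d * Real.exp 4 * n * Real.exp (-K ^ 2 / 2)) := by
          refine ENNReal.ofReal_le_ofReal ?_
          refine le_trans (Finset.sum_le_card_nsmul _ _ _ hC) ?_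
          rw [Nat.card_Icc, nsmul_eq_mul]
          have : ((n + 1 - 1 : ℕ) : ℝ) = (n : ℝ) := by norm_num
          rw [this]
          ring_nf
          exact le_refl _
  calc ∫⁻ ω, ((Set.ncard {x | x ∈ sirRho d R (B ω) ({0} : Set (Vert d)) ∅ (n + 1) ∧
          ∃ i, K * Real.sqrt n < |((x i : ℤ) : ℝ)| / R}) : ℝ≥0∞) ∂μ
      ≤ ∫⁻ ω, (∑ m ∈ Finset.Icc 1 n, ∑ g ∈ G m,
          (pathEvent B g).indicator (fun _ => (1:ℝ≥0∞)) ω) ∂μ := lintegral_mono key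
    _ = ∑ m ∈ Finset.Icc 1 n, ∑ g ∈ G m, μ (pathEvent B g) := hint
    _ ≤ _ := hnumeric

end
end

section
/- For every a > 0 there exists a constant B = B(a) such that for all r, N ∈ ℕ and q ∈ [0,1] with q ≤ 1/2 and 1 ≤ N·q ≤ 1 + a/r², the Galton–Watson process X with Binomial(N, q) offspring distribution and X_0 = 1 satisfies P(X_{r²} > 0) ≤ B·r^{−2}. -/
set_option maxHeartbeats 1000000
set_option linter.unusedVariables false
set_option linter.unusedSectionVars false


open MeasureTheory ProbabilityTheory Filter
open scoped ENNReal Classical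

noncomputable section

/-- The Galton–Watson process built from the offspring variables `ξ n i`:
`X_0 = 1`, `X_{n+1} = Σ_{i<X_n} ξ n i`. -/
def gw (ξ : ℕ → ℕ → ℕ) : ℕ → ℕ
  | 0 => 1
  | n + 1 => ∑ i ∈ Finset.range (gw ξ n), ξ n i

/-- The Binomial(N,q) probability mass function at `j`. -/
def binomPMF (N : ℕ) (q : ℝ) (j : ℕ) : ℝ := (N.choose j : ℝ) * q ^ j * (1 - q) ^ (N - j)

/-- The variables `ξ ω n i` form an i.i.d. Binomial(N,q) family under `μ`. -/
def IsBinomField {Ω : Type} [MeasurableSpace Ω] (μ : Measure Ω) (N : ℕ) (q : ℝ)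
    (ξ : Ω → ℕ → ℕ → ℕ) : Prop :=
  (∀ n i, Measurable fun ω => ξ ω n i) ∧
  iIndepFun (m := fun _ => ⊤) (fun (q : ℕ × ℕ) ω => ξ ω q.1 q.2) μ ∧
  (∀ n i j, μ {ω | ξ ω n i = j} = ENNReal.ofReal (binomPMF N q j))


open Finset in
/-- Bonferroni / inclusion-exclusion truncation at third order. -/
lemma bonferroni3 (x : ℝ) (hx0 : 0 ≤ x) (hx1 : x ≤ 1) (N : ℕ) :
    1 - N * x + (N.choose 2 : ℝ) * x ^ 2 - (N.choose 3 : ℝ) * x ^ 3 ≤ (1 - x) ^ N := by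
  induction N with
  | zero => simp
  | succ n ih =>
    have h1x : 0 ≤ 1 - x := by linarith
    have h2 : (1 - x) ^ (n + 1) = (1 - x) * (1 - x) ^ n := by ring
    have key : (1 - x) * (1 - n * x + (n.choose 2 : ℝ) * x ^ 2 - (n.choose 3 : ℝ) * x ^ 3)
        ≤ (1 - x) ^ (n + 1) := by
      rw [h2]
      exact mul_le_mul_of_nonneg_left ih h1x
    refine le_trans ?_ key
    have hc2 : ((n + 1).choose 2 : ℝ) = (n.choose 2 : ℝ) + n := by
      rw [Nat.choose_succ_succ]
      push_cast [Nat.choose_one_right]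
      ring
    have hc3 : ((n + 1).choose 3 : ℝ) = (n.choose 3 : ℝ) + (n.choose 2 : ℝ) := by
      rw [Nat.choose_succ_succ]
      push_cast
      ring
    have hx3 : 0 ≤ (n.choose 3 : ℝ) * x ^ 4 := by positivity
    push_cast [hc2, hc3]
    nlinarith [hx3]

/-- One-step drift bound for the extinction recursion. -/
lemma step_bound (N : ℕ) (q p : ℝ) (hq0 : 0 ≤ q) (hq : q ≤ 1 / 2)
    (hm1 : 1 ≤ (N : ℝ) * q) (hm9 : (N : ℝ) * q ≤ 9 / 8)
    (hp0 : 0 ≤ p) (hp1 : p ≤ 1) :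
    1 - (1 - q * p) ^ N ≤ (N : ℝ) * q * p - p ^ 2 / 8 := by
  have hN2 : 2 ≤ N := by
    by_contra h
    push_neg at h
    interval_cases N <;> simp_all <;> nlinarith
  have hx1 : q * p ≤ 1 := by nlinarith
  have hx0 : 0 ≤ q * p := mul_nonneg hq0 hp0
  have hb := bonferroni3 (q * p) hx0 hx1 N
  have hc2 : (N.choose 2 : ℝ) = N * (N - 1) / 2 := Nat.cast_choose_two ℝ N
  have hc3 : (N.choose 3 : ℝ) * 3 = (N.choose 2 : ℝ) * ((N : ℝ) - 2) := by
    have h := Nat.choose_succ_right_eq N 2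
    have : ((N.choose 3 * 3 : ℕ) : ℝ) = ((N.choose 2 * (N - 2) : ℕ) : ℝ) := by
      exact_mod_cast congrArg (Nat.cast (R := ℝ)) h
    push_cast [Nat.cast_sub hN2] at this
    linarith
  have hNR : (2 : ℝ) ≤ N := by exact_mod_cast hN2
  have hC2nn : (0:ℝ) ≤ (N.choose 2 : ℝ) := by positivity
  -- C3 * x ≤ C2 / 2
  have s1 : (N.choose 3 : ℝ) * (q * p) ≤ (N.choose 2 : ℝ) / 2 := by
    have h1 : ((N : ℝ) - 2) * (q * p) ≤ 3 / 2 := by nlinarith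
    nlinarith
  have s1' : (N.choose 3 : ℝ) * (q * p) ^ 3 ≤ ((N.choose 2 : ℝ) / 2) * (q * p) ^ 2 := by
    have := mul_le_mul_of_nonneg_right s1 (sq_nonneg (q * p))
    nlinarith [sq_nonneg (q*p)]
  have s2 : p ^ 2 / 8 ≤ ((N.choose 2 : ℝ) / 2) * (q * p) ^ 2 := by
    have hC2 : (N : ℝ) ^ 2 / 4 ≤ (N.choose 2 : ℝ) := by
      rw [hc2]; nlinarith
    have : 1 ≤ ((N : ℝ) * q) ^ 2 := by nlinarith
    nlinarith [sq_nonneg p, mul_nonneg (mul_nonneg hq0 hq0) (sq_nonneg p)]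
  nlinarith [hb]

/-- Discrete Riccati-type recursion bound. -/
lemma recursion_bound (m : ℝ) (hm1 : 1 ≤ m) (hm9 : m ≤ 9 / 8)
    (p : ℕ → ℝ) (hp0 : p 0 = 1) (hrange : ∀ n, 0 ≤ p n ∧ p n ≤ 1)
    (hrec : ∀ n, p (n + 1) ≤ m * p n - (p n) ^ 2 / 8) :
    ∀ n, p n ≤ m ^ (n + 1) / (m + n / 8) := by
  have hmpos : 0 < m := by linarith
  intro n
  induction n with
  | zero => simp [hp0, div_self (ne_of_gt hmpos)]
  | succ n ih =>
    have hu : 0 < m + (n : ℝ) / 8 := by positivity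
    have hv : 0 < m + ((n : ℝ) + 1) / 8 := by positivity
    have hv' : 0 < m + ((n + 1 : ℕ) : ℝ) / 8 := by push_cast; linarith
    have hmn1 : (1:ℝ) ≤ m ^ n := one_le_pow₀ hm1
    have hA0 : (0:ℝ) < m ^ (n + 1) := by positivity
    have hpn0 := (hrange n).1
    have hpn1 := (hrange n).2
    have hmono : ∀ x y : ℝ, 0 ≤ x → x ≤ y → y ≤ 1 → m * x - x ^ 2 / 8 ≤ m * y - y ^ 2 / 8 := by
      intro x y hx hxy hy1
      nlinarith
    have key : m * (m + (n : ℝ) / 8) ≤ m ^ (n + 1) * (m + ((n : ℝ) + 1) / 8) := by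
      have h1 : m + (n : ℝ) / 8 ≤ m + ((n : ℝ) + 1) / 8 := by linarith
      have h2 : m + ((n : ℝ) + 1) / 8 ≤ m ^ n * (m + ((n : ℝ) + 1) / 8) := by
        nlinarith
      calc m * (m + (n : ℝ) / 8) ≤ m * (m ^ n * (m + ((n : ℝ) + 1) / 8)) := by
            apply mul_le_mul_of_nonneg_left (le_trans h1 h2) hmpos.le
        _ = m ^ (n + 1) * (m + ((n : ℝ) + 1) / 8) := by ring
    by_cases hφ : m ^ (n + 1) / (m + (n : ℝ) / 8) ≤ 1
    · have h1 : p (n + 1) ≤ m * (m ^ (n + 1) / (m + (n:ℝ) / 8))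
          - (m ^ (n + 1) / (m + (n:ℝ) / 8)) ^ 2 / 8 :=
        le_trans (hrec n) (hmono _ _ hpn0 ih hφ)
      refine le_trans h1 ?_
      have LHS_eq : m * (m ^ (n + 1) / (m + (n:ℝ) / 8))
          - (m ^ (n + 1) / (m + (n:ℝ) / 8)) ^ 2 / 8
          = (m * m ^ (n + 1) * (m + (n:ℝ) / 8) - (m ^ (n + 1)) ^ 2 / 8)
            / (m + (n:ℝ) / 8) ^ 2 := by
        field_simp
      rw [LHS_eq]
      push_cast
      rw [div_le_div_iff₀ (by positivity) hv,
        show m ^ (n + 1 + 1) = m * m ^ (n + 1) by ring]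
      have hkey' := mul_le_mul_of_nonneg_left key (le_of_lt (by positivity : (0:ℝ) < m ^ (n+1) / 8))
      nlinarith [hkey', sq_nonneg (m ^ (n+1))]
    · push_neg at hφ
      have h1 : p (n + 1) ≤ m - 1 / 8 := by
        have := hmono (p n) 1 hpn0 hpn1 le_rfl
        have h2 := hrec n
        nlinarith
      refine le_trans h1 ?_
      push_cast
      rw [le_div_iff₀ hv, show m ^ (n + 1 + 1) = m * m ^ (n + 1) by ring]
      have hgt : m + (n:ℝ) / 8 < m ^ (n + 1) := by
        have := (lt_div_iff₀ hu).mp hφ; linarith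
      nlinarith [mul_le_mul_of_nonneg_left hgt.le hmpos.le, Nat.cast_nonneg (α := ℝ) n]

def cAlg {Ω : Type} [MeasurableSpace Ω] (ξ : Ω → ℕ → ℕ → ℕ) (p : ℕ × ℕ) :
    MeasurableSpace Ω :=
  MeasurableSpace.comap (fun ω => ξ ω p.1 p.2) ⊤

def pastAlg {Ω : Type} [MeasurableSpace Ω] (ξ : Ω → ℕ → ℕ → ℕ) (n : ℕ) :
    MeasurableSpace Ω :=
  ⨆ p ∈ {p : ℕ × ℕ | p.1 < n}, cAlg ξ p

def rowAlg {Ω : Type} [MeasurableSpace Ω] (ξ : Ω → ℕ → ℕ → ℕ) (n k : ℕ) :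
    MeasurableSpace Ω :=
  ⨆ p ∈ {p : ℕ × ℕ | p.1 = n ∧ p.2 < k}, cAlg ξ p

variable {Ω : Type} [MeasurableSpace Ω] {μ : Measure Ω} {N : ℕ} {q : ℝ}
  {ξ : Ω → ℕ → ℕ → ℕ}

lemma cAlg_meas (p : ℕ × ℕ) : Measurable[cAlg ξ p] fun ω => ξ ω p.1 p.2 :=
  Measurable.of_comap_le le_rfl

lemma meas_sum_range {m' : MeasurableSpace Ω} {k : ℕ} {f : ℕ → Ω → ℕ}
    (hf : ∀ i, i < k → Measurable[m'] (f i)) :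
    Measurable[m'] fun ω => ∑ i ∈ Finset.range k, f i ω :=
  Finset.measurable_sum _ (fun i hi => hf i (Finset.mem_range.mp hi))

lemma meas_sum_rand {m' : MeasurableSpace Ω} {g : Ω → ℕ} (hg : Measurable[m'] g)
    {f : ℕ → Ω → ℕ} (hf : ∀ i, Measurable[m'] (f i)) :
    Measurable[m'] fun ω => ∑ i ∈ Finset.range (g ω), f i ω := by
  apply measurable_to_countable'
  intro j
  have heq : (fun ω => ∑ i ∈ Finset.range (g ω), f i ω) ⁻¹' {j}
      = ⋃ k, ({ω | g ω = k} ∩ {ω | ∑ i ∈ Finset.range k, f i ω = j}) := by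
    ext ω
    simp only [Set.mem_preimage, Set.mem_singleton_iff, Set.mem_iUnion, Set.mem_inter_iff,
      Set.mem_setOf_eq]
    constructor
    · intro h; exact ⟨g ω, rfl, h⟩
    · rintro ⟨k, hk, h⟩; rw [hk]; exact h
  rw [heq]
  exact MeasurableSet.iUnion fun k =>
    (hg (measurableSet_singleton k)).inter
      ((meas_sum_range (fun i _ => hf i)) (measurableSet_singleton j))

lemma pastAlg_mono {n n' : ℕ} (h : n ≤ n') : pastAlg ξ n ≤ pastAlg ξ n' :=
  biSup_mono (fun p hp => lt_of_lt_of_le hp h)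

lemma meas_xi_pastAlg {a b n : ℕ} (h : a < n) :
    Measurable[pastAlg ξ n] fun ω => ξ ω a b := by
  refine (cAlg_meas (ξ := ξ) (a, b)).mono ?_ le_rfl
  exact le_iSup₂ (f := fun p (_ : p ∈ {p : ℕ × ℕ | p.1 < n}) => cAlg ξ p) (a, b) h

lemma meas_xi_rowAlg {n i k : ℕ} (h : i < k) :
    Measurable[rowAlg ξ n k] fun ω => ξ ω n i := by
  refine (cAlg_meas (ξ := ξ) (n, i)).mono ?_ le_rfl
  exact le_iSup₂ (f := fun p (_ : p ∈ {p : ℕ × ℕ | p.1 = n ∧ p.2 < k}) => cAlg ξ p) (n, i)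
    ⟨rfl, h⟩

lemma gw_meas_pastAlg : ∀ n, Measurable[pastAlg ξ n] fun ω => gw (ξ ω) n := by
  intro n
  induction n with
  | zero => exact measurable_const
  | succ n ih =>
    show Measurable[pastAlg ξ (n+1)] fun ω => ∑ i ∈ Finset.range (gw (ξ ω) n), ξ ω n i
    exact meas_sum_rand (ih.mono (pastAlg_mono (Nat.le_succ n)) le_rfl)
      (fun i => meas_xi_pastAlg (Nat.lt_succ_self n))

lemma sum_meas_rowAlg (n k : ℕ) :
    Measurable[rowAlg ξ n k] fun ω => ∑ i ∈ Finset.range k, ξ ω n i :=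
  meas_sum_range fun _ hi => meas_xi_rowAlg hi

lemma pastAlg_le (hmeas : ∀ n i, Measurable fun ω => ξ ω n i) (n : ℕ) :
    pastAlg ξ n ≤ ‹MeasurableSpace Ω› :=
  iSup₂_le fun p _ => (hmeas p.1 p.2).comap_le

lemma rowAlg_le (hmeas : ∀ n i, Measurable fun ω => ξ ω n i) (n k : ℕ) :
    rowAlg ξ n k ≤ ‹MeasurableSpace Ω› :=
  iSup₂_le fun p _ => (hmeas p.1 p.2).comap_le

lemma gw_meas (hmeas : ∀ n i, Measurable fun ω => ξ ω n i) (n : ℕ) :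
    Measurable fun ω => gw (ξ ω) n :=
  (gw_meas_pastAlg n).mono (pastAlg_le hmeas n) le_rfl

lemma sum_meas (hmeas : ∀ n i, Measurable fun ω => ξ ω n i) (n k : ℕ) :
    Measurable fun ω => ∑ i ∈ Finset.range k, ξ ω n i :=
  (sum_meas_rowAlg n k).mono (rowAlg_le hmeas n k) le_rfl

lemma iIndep_cAlg (h : IsBinomField μ N q ξ) : iIndep (cAlg ξ) μ := by
  have := h.2.1
  rw [iIndepFun_iff_iIndep] at this
  exact this

lemma cAlg_le (hm : ∀ n i, Measurable fun ω => ξ ω n i) (p : ℕ × ℕ) :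
    cAlg ξ p ≤ ‹MeasurableSpace Ω› := (hm p.1 p.2).comap_le

lemma indep_of_disjoint (h : IsBinomField μ N q ξ) {S T : Set (ℕ × ℕ)}
    (hST : Disjoint S T) :
    Indep (⨆ p ∈ S, cAlg ξ p) (⨆ p ∈ T, cAlg ξ p) μ := by
  have hi := iIndep_cAlg h
  exact ProbabilityTheory.indep_iSup_of_disjoint (cAlg_le h.1) hi hST

lemma indep_mul (h : IsBinomField μ N q ξ) {S T : Set (ℕ × ℕ)} (hST : Disjoint S T)
    {A B : Set Ω} (hA : MeasurableSet[⨆ p ∈ S, cAlg ξ p] A)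
    (hB : MeasurableSet[⨆ p ∈ T, cAlg ξ p] B) :
    μ (A ∩ B) = μ A * μ B :=
  (Indep_iff _ _ _).mp (indep_of_disjoint h hST) A B hA hB

----------------------------------------------------------------
-- NEW PART
----------------------------------------------------------------

/-- decomposition over the value of generation `n` -/
lemma measure_gw_succ (h : IsBinomField μ N q ξ) (n j : ℕ) :
    μ {ω | gw (ξ ω) (n+1) = j}
      = ∑' k, μ {ω | gw (ξ ω) n = k} * μ {ω | ∑ i ∈ Finset.range k, ξ ω n i = j} := by
  have heq : {ω | gw (ξ ω) (n+1) = j}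
      = ⋃ k, ({ω | gw (ξ ω) n = k} ∩ {ω | ∑ i ∈ Finset.range k, ξ ω n i = j}) := by
    ext ω
    simp only [Set.mem_iUnion, Set.mem_inter_iff, Set.mem_setOf_eq]
    constructor
    · intro hj; exact ⟨gw (ξ ω) n, rfl, hj⟩
    · rintro ⟨k, hk, hs⟩
      show (∑ i ∈ Finset.range (gw (ξ ω) n), ξ ω n i) = j
      rw [hk]; exact hs
  rw [heq, measure_iUnion]
  · refine tsum_congr fun k => ?_
    refine indep_mul (S := {p : ℕ × ℕ | p.1 < n}) (T := {p : ℕ × ℕ | p.1 = n ∧ p.2 < k}) h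
      ?_ ?_ ?_
    · rw [Set.disjoint_left]
      rintro ⟨a, b⟩ ha ⟨hb1, _⟩
      simp only [Set.mem_setOf_eq] at ha
      omega
    · exact (gw_meas_pastAlg n) (measurableSet_singleton k)
    · exact (sum_meas_rowAlg n k) (measurableSet_singleton j)
  · intro k k' hkk'
    simp only [Function.onFun]
    rw [Set.disjoint_left]
    rintro ω ⟨h1, _⟩ ⟨h2, _⟩
    exact hkk' (h1.symm.trans h2)
  · intro k
    exact ((gw_meas h.1 n) (measurableSet_singleton k)).inter
      ((sum_meas h.1 n k) (measurableSet_singleton j))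

/-- convolution identity for partial sums along a row -/
lemma measure_sum_succ (h : IsBinomField μ N q ξ) (n k j : ℕ) :
    μ {ω | ∑ i ∈ Finset.range (k+1), ξ ω n i = j}
      = ∑ j1 ∈ Finset.range (j+1),
          μ {ω | ∑ i ∈ Finset.range k, ξ ω n i = j1} * μ {ω | ξ ω n k = j - j1} := by
  have heq : {ω | ∑ i ∈ Finset.range (k+1), ξ ω n i = j}
      = ⋃ j1 ∈ Finset.range (j+1),
          ({ω | ∑ i ∈ Finset.range k, ξ ω n i = j1} ∩ {ω | ξ ω n k = j - j1}) := by
    ext ω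
    simp only [Set.mem_iUnion, Set.mem_inter_iff, Set.mem_setOf_eq, Finset.mem_range,
      Finset.sum_range_succ]
    constructor
    · intro hj
      exact ⟨∑ i ∈ Finset.range k, ξ ω n i, by omega, rfl, by omega⟩
    · rintro ⟨j1, hlt, h1, h2⟩
      omega
  rw [heq, measure_biUnion_finset]
  · refine Finset.sum_congr rfl fun j1 _ => ?_
    refine indep_mul (S := {p : ℕ × ℕ | p.1 = n ∧ p.2 < k}) (T := {(n, k)}) h ?_ ?_ ?_
    · rw [Set.disjoint_left]
      rintro ⟨a, b⟩ ⟨ha1, ha2⟩ hb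
      simp only [Set.mem_singleton_iff, Prod.mk.injEq] at hb
      omega
    · exact (sum_meas_rowAlg n k) (measurableSet_singleton j1)
    · refine ((cAlg_meas (ξ := ξ) (n, k)).mono ?_ le_rfl) (measurableSet_singleton (j - j1))
      exact le_iSup₂ (f := fun p (_ : p ∈ ({(n, k)} : Set (ℕ × ℕ))) => cAlg ξ p) (n, k) rfl
  · intro j1 _ j2 _ hne
    rw [Function.onFun, Set.disjoint_left]
    rintro ω ⟨h1, _⟩ ⟨h2, _⟩
    exact hne (h1.symm.trans h2)
  · intro j1 _
    exact ((sum_meas h.1 n k) (measurableSet_singleton j1)).inter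
      ((h.1 n k) (measurableSet_singleton (j - j1)))


/-- Cauchy product for ENNReal series -/
lemma tsum_cauchy (A B : ℕ → ℝ≥0∞) :
    ∑' j, ∑ j1 ∈ Finset.range (j+1), A j1 * B (j - j1) = (∑' j, A j) * (∑' j, B j) := by
  set G : ℕ × ℕ → ℝ≥0∞ := fun x => if x.2 ≤ x.1 then A x.2 * B (x.1 - x.2) else 0 with hG
  have hinj : Function.Injective (fun p : ℕ × ℕ => (p.1 + p.2, p.1)) := by
    rintro ⟨a, b⟩ ⟨c, d⟩ h
    simp only [Prod.mk.injEq] at h ⊢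
    omega
  have hcomp : ∀ p : ℕ × ℕ, G (p.1 + p.2, p.1) = A p.1 * B p.2 := by
    rintro ⟨a, b⟩
    simp only [hG]
    rw [if_pos (by omega : a ≤ a + b)]
    have hab : a + b - a = b := by omega
    rw [hab]
  have hsupp : Function.support G ⊆ Set.range (fun p : ℕ × ℕ => (p.1 + p.2, p.1)) := by
    intro x hx
    obtain ⟨j, j1⟩ := x
    simp only [hG, Function.mem_support] at hx
    have hle : j1 ≤ j := by
      by_contra hc
      exact hx (if_neg hc)
    refine ⟨(j1, j - j1), ?_⟩
    show (j1 + (j - j1), j1) = (j, j1)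
    exact Prod.ext (by omega) rfl
  have key := hinj.tsum_eq (f := G) hsupp
  calc ∑' j, ∑ j1 ∈ Finset.range (j+1), A j1 * B (j - j1)
      = ∑' j, ∑' j1, G (j, j1) := by
        refine tsum_congr fun j => ?_
        rw [tsum_eq_sum (s := Finset.range (j+1))]
        · refine Finset.sum_congr rfl fun j1 hj1 => ?_
          simp only [hG]
          rw [if_pos (Nat.lt_succ_iff.mp (Finset.mem_range.mp hj1))]
        · intro j1 hj1
          simp only [hG]
          rw [if_neg (by simpa [Nat.lt_succ_iff] using hj1)]
    _ = ∑' (x : ℕ × ℕ), G x := (ENNReal.tsum_prod').symm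
    _ = ∑' (p : ℕ × ℕ), G (p.1 + p.2, p.1) := key.symm
    _ = ∑' (p : ℕ × ℕ), A p.1 * B p.2 := tsum_congr hcomp
    _ = ∑' j, A j * ∑' j', B j' := by
        rw [ENNReal.tsum_prod']
        exact tsum_congr fun j => ENNReal.tsum_mul_left (a := A j) (f := fun b => B b)
    _ = (∑' j, A j) * (∑' j, B j) := ENNReal.tsum_mul_right


def fqGW (N : ℕ) (q : ℝ) (t : ℝ) : ℝ := (1 - q + q * t) ^ N



lemma binomPMF_nonneg (hq0 : 0 ≤ q) (hq1 : q ≤ 1) (j : ℕ) : 0 ≤ binomPMF N q j := by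
  have h1 : (0:ℝ) ≤ 1 - q := by linarith
  unfold binomPMF
  positivity

lemma binomPMF_pgf (N : ℕ) (q t : ℝ) :
    ∑ j ∈ Finset.range (N + 1), binomPMF N q j * t ^ j = (1 - q + q * t) ^ N := by
  have h := add_pow (q * t) (1 - q) N
  rw [show (1 : ℝ) - q + q * t = q * t + (1 - q) by ring, h]
  refine Finset.sum_congr rfl fun j hj => ?_
  unfold binomPMF
  ring

lemma fqGW_nonneg (hq0 : 0 ≤ q) (hq1 : q ≤ 1) {t : ℝ} (ht0 : 0 ≤ t) : 0 ≤ fqGW N q t := by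
  have : 0 ≤ 1 - q + q * t := by nlinarith
  unfold fqGW
  positivity

lemma fqGW_le_one (hq0 : 0 ≤ q) (hq1 : q ≤ 1) {t : ℝ} (ht0 : 0 ≤ t) (ht1 : t ≤ 1) :
    fqGW N q t ≤ 1 := by
  apply pow_le_one₀ (by nlinarith) (by nlinarith)

lemma iterGW_mem (hq0 : 0 ≤ q) (hq1 : q ≤ 1) :
    ∀ n, 0 ≤ (fqGW N q)^[n] 0 ∧ (fqGW N q)^[n] 0 ≤ 1 := by
  intro n
  induction n with
  | zero => simp
  | succ n ih =>
    rw [Function.iterate_succ_apply']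
    exact ⟨fqGW_nonneg hq0 hq1 ih.1, fqGW_le_one hq0 hq1 ih.1 ih.2⟩

/-- pgf of a single offspring variable -/
lemma pgf_xi (h : IsBinomField μ N q ξ) (hq0 : 0 ≤ q) (hq1 : q ≤ 1) (n i : ℕ)
    {t : ℝ} (ht0 : 0 ≤ t) :
    ∑' j, μ {ω | ξ ω n i = j} * ENNReal.ofReal (t ^ j) = ENNReal.ofReal (fqGW N q t) := by
  have hterm : ∀ j, μ {ω | ξ ω n i = j} * ENNReal.ofReal (t ^ j)
      = ENNReal.ofReal (binomPMF N q j * t ^ j) := fun j => by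
    rw [h.2.2 n i j, ← ENNReal.ofReal_mul (binomPMF_nonneg hq0 hq1 j)]
  calc ∑' j, μ {ω | ξ ω n i = j} * ENNReal.ofReal (t ^ j)
      = ∑' j, ENNReal.ofReal (binomPMF N q j * t ^ j) := tsum_congr hterm
    _ = ∑ j ∈ Finset.range (N+1), ENNReal.ofReal (binomPMF N q j * t ^ j) := by
        apply tsum_eq_sum
        intro j hj
        have hNj : N < j := by simpa [Nat.lt_succ_iff] using Finset.mem_range.not.mp hj
        have : N.choose j = 0 := Nat.choose_eq_zero_of_lt hNj
        simp [binomPMF, this]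
    _ = ENNReal.ofReal (∑ j ∈ Finset.range (N+1), binomPMF N q j * t ^ j) := by
        rw [ENNReal.ofReal_sum_of_nonneg]
        intro j _
        exact mul_nonneg (binomPMF_nonneg hq0 hq1 j) (pow_nonneg ht0 j)
    _ = ENNReal.ofReal (fqGW N q t) := by rw [binomPMF_pgf]; rfl

/-- pgf of a partial row sum -/
lemma pgf_S [IsProbabilityMeasure μ] (h : IsBinomField μ N q ξ) (hq0 : 0 ≤ q) (hq1 : q ≤ 1)
    (n : ℕ) {t : ℝ} (ht0 : 0 ≤ t) :
    ∀ k, ∑' j, μ {ω | ∑ i ∈ Finset.range k, ξ ω n i = j} * ENNReal.ofReal (t ^ j)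
      = ENNReal.ofReal (fqGW N q t) ^ k := by
  intro k
  induction k with
  | zero =>
    rw [tsum_eq_single 0]
    · have : {ω : Ω | ∑ i ∈ Finset.range 0, ξ ω n i = 0} = Set.univ := by
        ext ω; simp
      rw [this]
      simp
    · intro j hj
      have : {ω : Ω | ∑ i ∈ Finset.range 0, ξ ω n i = j} = ∅ := by
        ext ω; simp [hj.symm]  -- sum over range 0 is 0 ≠ j
      rw [this]
      simp
  | succ k ih =>
    have hconv := measure_sum_succ h n k
    calc ∑' j, μ {ω | ∑ i ∈ Finset.range (k+1), ξ ω n i = j} * ENNReal.ofReal (t ^ j)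
        = ∑' j, ∑ j1 ∈ Finset.range (j+1),
            (μ {ω | ∑ i ∈ Finset.range k, ξ ω n i = j1} * ENNReal.ofReal (t ^ j1)) *
            (μ {ω | ξ ω n k = j - j1} * ENNReal.ofReal (t ^ (j - j1))) := by
          refine tsum_congr fun j => ?_
          rw [hconv j, Finset.sum_mul]
          refine Finset.sum_congr rfl fun j1 hj1 => ?_
          have hle : j1 ≤ j := Nat.lt_succ_iff.mp (Finset.mem_range.mp hj1)
          have ht : t ^ j = t ^ j1 * t ^ (j - j1) := by
            rw [← pow_add]
            congr 1
            omega
          rw [ht, ENNReal.ofReal_mul (pow_nonneg ht0 j1)]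
          ring
      _ = (∑' j, μ {ω | ∑ i ∈ Finset.range k, ξ ω n i = j} * ENNReal.ofReal (t ^ j)) *
          (∑' j, μ {ω | ξ ω n k = j} * ENNReal.ofReal (t ^ j)) := tsum_cauchy
            (fun j1 => μ {ω | ∑ i ∈ Finset.range k, ξ ω n i = j1} * ENNReal.ofReal (t ^ j1))
            (fun j2 => μ {ω | ξ ω n k = j2} * ENNReal.ofReal (t ^ j2))
      _ = ENNReal.ofReal (fqGW N q t) ^ (k + 1) := by
          rw [ih, pgf_xi h hq0 hq1 n k ht0, pow_succ]

/-- one-step recursion for the generating function of the population size -/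
lemma E_rec [IsProbabilityMeasure μ] (h : IsBinomField μ N q ξ) (hq0 : 0 ≤ q) (hq1 : q ≤ 1)
    (n : ℕ) {t : ℝ} (ht0 : 0 ≤ t) :
    ∑' k, μ {ω | gw (ξ ω) (n+1) = k} * ENNReal.ofReal (t ^ k)
      = ∑' k, μ {ω | gw (ξ ω) n = k} * ENNReal.ofReal ((fqGW N q t) ^ k) := by
  calc ∑' j, μ {ω | gw (ξ ω) (n+1) = j} * ENNReal.ofReal (t ^ j)
      = ∑' j, ∑' k, (μ {ω | gw (ξ ω) n = k} *
          μ {ω | ∑ i ∈ Finset.range k, ξ ω n i = j}) * ENNReal.ofReal (t ^ j) := by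
        refine tsum_congr fun j => ?_
        rw [measure_gw_succ h n j, ENNReal.tsum_mul_right]
    _ = ∑' k, ∑' j, (μ {ω | gw (ξ ω) n = k} *
          μ {ω | ∑ i ∈ Finset.range k, ξ ω n i = j}) * ENNReal.ofReal (t ^ j) :=
        ENNReal.tsum_comm
    _ = ∑' k, μ {ω | gw (ξ ω) n = k} *
          ∑' j, μ {ω | ∑ i ∈ Finset.range k, ξ ω n i = j} * ENNReal.ofReal (t ^ j) := by
        refine tsum_congr fun k => ?_
        rw [← ENNReal.tsum_mul_left]
        exact tsum_congr fun j => by rw [mul_assoc]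
    _ = ∑' k, μ {ω | gw (ξ ω) n = k} * ENNReal.ofReal ((fqGW N q t) ^ k) := by
        refine tsum_congr fun k => ?_
        rw [pgf_S h hq0 hq1 n ht0 k,
          ENNReal.ofReal_pow (fqGW_nonneg hq0 hq1 ht0)]

/-- closed form of the generating function -/
lemma E_closed [IsProbabilityMeasure μ] (h : IsBinomField μ N q ξ) (hq0 : 0 ≤ q) (hq1 : q ≤ 1) :
    ∀ n, ∀ t : ℝ, 0 ≤ t → t ≤ 1 →
      ∑' k, μ {ω | gw (ξ ω) n = k} * ENNReal.ofReal (t ^ k)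
        = ENNReal.ofReal ((fqGW N q)^[n] t) := by
  intro n
  induction n with
  | zero =>
    intro t ht0 ht1
    rw [tsum_eq_single 1]
    · have : {ω : Ω | gw (ξ ω) 0 = 1} = Set.univ := by
        ext ω; simp [gw]
      rw [this]
      simp
    · intro k hk
      have : {ω : Ω | gw (ξ ω) 0 = k} = ∅ := by
        ext ω; simp [gw, hk.symm]
      rw [this]
      simp
  | succ n ih =>
    intro t ht0 ht1
    rw [E_rec h hq0 hq1 n ht0,
      ih (fqGW N q t) (fqGW_nonneg hq0 hq1 ht0) (fqGW_le_one hq0 hq1 ht0 ht1),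
      ← Function.iterate_succ_apply]

lemma measure_extinct [IsProbabilityMeasure μ] (h : IsBinomField μ N q ξ)
    (hq0 : 0 ≤ q) (hq1 : q ≤ 1) (n : ℕ) :
    μ {ω | gw (ξ ω) n = 0} = ENNReal.ofReal ((fqGW N q)^[n] 0) := by
  have hE := E_closed h hq0 hq1 n 0 le_rfl zero_le_one
  rw [← hE, tsum_eq_single 0]
  · simp
  · intro k hk
    simp [zero_pow hk]

lemma measure_survive [IsProbabilityMeasure μ] (h : IsBinomField μ N q ξ)
    (hq0 : 0 ≤ q) (hq1 : q ≤ 1) (n : ℕ) :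
    (μ {ω | 0 < gw (ξ ω) n}).toReal = 1 - (fqGW N q)^[n] 0 := by
  obtain ⟨hP0, hP1⟩ := iterGW_mem (N := N) hq0 hq1 n
  have hset : {ω | 0 < gw (ξ ω) n} = {ω | gw (ξ ω) n = 0}ᶜ := by
    ext ω; simp [Nat.pos_iff_ne_zero]
  have hms : MeasurableSet {ω | gw (ξ ω) n = 0} := (gw_meas h.1 n) (measurableSet_singleton 0)
  rw [hset, prob_compl_eq_one_sub hms, measure_extinct h hq0 hq1 n]
  rw [show (1 : ℝ≥0∞) = ENNReal.ofReal 1 from ENNReal.ofReal_one.symm,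
    ← ENNReal.ofReal_sub 1 hP0, ENNReal.toReal_ofReal (by linarith)]


/-- Extinction bound: for every `a > 0` there is `B(a)` such that any binomial
Galton–Watson process with `q ≤ 1/2` and `1 ≤ Nq ≤ 1 + a/r²` satisfies
`P(X_{r²} > 0) ≤ B·r^{−2}`. -/
theorem gw_extinction_bound (a : ℝ) (ha : 0 < a) :
    ∃ B : ℝ, ∀ (r N : ℕ), 0 < r → 0 < N → ∀ q : ℝ, 0 ≤ q → q ≤ 1 / 2 →
      1 ≤ (N : ℝ) * q → (N : ℝ) * q ≤ 1 + a / (r : ℝ) ^ 2 →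
      ∀ (Ω : Type) [MeasurableSpace Ω] (μ : Measure Ω), IsProbabilityMeasure μ →
      ∀ ξ : Ω → ℕ → ℕ → ℕ, IsBinomField μ N q ξ →
      (μ {ω | 0 < gw (ξ ω) (r ^ 2)}).toReal ≤ B / (r : ℝ) ^ 2 := by
  refine ⟨9 * Real.exp a + 8 * a, ?_⟩
  intro r N hr hN q hq0 hq12 hm1 hm2 Ω mΩ μ hμ ξ hbf
  haveI := hμ
  have hq1 : q ≤ 1 := by linarith
  have hrr : (0:ℝ) < (r:ℝ) ^ 2 := by
    have : (0:ℝ) < (r:ℝ) := by exact_mod_cast hr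
    positivity
  set n := r ^ 2 with hn
  have hnr : ((n : ℕ) : ℝ) = (r:ℝ) ^ 2 := by rw [hn]; push_cast; ring
  obtain ⟨hP0, hP1⟩ := iterGW_mem (N := N) hq0 hq1 n
  have hsurv := measure_survive hbf hq0 hq1 n
  have hexp : (0:ℝ) < Real.exp a := Real.exp_pos a
  by_cases hcase : (r:ℝ) ^ 2 < 8 * a
  · have h1 : (μ {ω | 0 < gw (ξ ω) n}).toReal ≤ 1 := by rw [hsurv]; linarith
    have h2 : (1:ℝ) ≤ (8 * a) / (r:ℝ) ^ 2 := (le_div_iff₀ hrr).mpr (by linarith)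
    have h3 : (8 * a) / (r:ℝ) ^ 2 ≤ (9 * Real.exp a + 8 * a) / (r:ℝ) ^ 2 := by
      gcongr
      linarith
    linarith
  · push_neg at hcase
    set m := (N:ℝ) * q with hm
    have hm9 : m ≤ 9/8 := by
      have h8 : a / (r:ℝ) ^ 2 ≤ 1/8 := by
        rw [div_le_iff₀ hrr]; linarith
      linarith
    set p : ℕ → ℝ := fun k => 1 - (fqGW N q)^[k] 0 with hp
    have hp0 : p 0 = 1 := by simp [hp]
    have hrange : ∀ k, 0 ≤ p k ∧ p k ≤ 1 := by
      intro k
      obtain ⟨h1, h2⟩ := iterGW_mem (N := N) hq0 hq1 k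
      constructor
      · simp only [hp]; linarith
      · simp only [hp]; linarith
    have hrec : ∀ k, p (k+1) ≤ m * p k - (p k) ^ 2 / 8 := by
      intro k
      have hiter : (fqGW N q)^[k+1] 0 = fqGW N q ((fqGW N q)^[k] 0) :=
        Function.iterate_succ_apply' _ _ _
      have hfq : fqGW N q ((fqGW N q)^[k] 0) = (1 - q * p k) ^ N := by
        unfold fqGW
        congr 1
        show 1 - q + q * ((fqGW N q)^[k] 0) = 1 - q * (1 - (fqGW N q)^[k] 0)
        ring
      have hsb := step_bound N q (p k) hq0 hq12 hm1 hm9 (hrange k).1 (hrange k).2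
      have : p (k+1) = 1 - (1 - q * p k) ^ N := by
        simp only [hp, hiter, hfq]
      rw [this]
      exact hsb
    have hrb := recursion_bound m hm1 hm9 p hp0 hrange hrec n
    have hm0 : (0:ℝ) ≤ m := by linarith
    have hma : m ≤ Real.exp (a / (r:ℝ) ^ 2) := by
      have := Real.add_one_le_exp (a / (r:ℝ) ^ 2)
      linarith
    have hme : m ^ n ≤ Real.exp a := by
      calc m ^ n ≤ (Real.exp (a / (r:ℝ) ^ 2)) ^ n := pow_le_pow_left₀ hm0 hma n
        _ = Real.exp (n * (a / (r:ℝ) ^ 2)) := (Real.exp_nat_mul _ n).symm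
        _ = Real.exp a := by
            congr 1
            rw [← hnr] at hrr ⊢
            field_simp
    have hnum : m ^ (n + 1) ≤ (9/8) * Real.exp a := by
      calc m ^ (n + 1) = m ^ n * m := by ring
        _ ≤ Real.exp a * (9/8) := by
            apply mul_le_mul hme hm9 hm0 hexp.le
        _ = (9/8) * Real.exp a := by ring
    have hden : (r:ℝ) ^ 2 / 8 ≤ m + (n : ℝ) / 8 := by
      rw [hnr]; linarith
    calc (μ {ω | 0 < gw (ξ ω) n}).toReal = p n := hsurv
      _ ≤ m ^ (n + 1) / (m + (n:ℝ) / 8) := hrb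
      _ ≤ ((9/8) * Real.exp a) / ((r:ℝ) ^ 2 / 8) := by
          apply div_le_div₀ (by positivity) hnum (by positivity) hden
      _ = 9 * Real.exp a / (r:ℝ) ^ 2 := by
          field_simp
      _ ≤ (9 * Real.exp a + 8 * a) / (r:ℝ) ^ 2 := by
          gcongr
          linarith

end
end
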